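/- Let d > 0 and r_max > 0. Let (r, θ) be a random pair where r has probability density 2·t/r_max² on [0, r_max], θ is uniformly distributed on [0, 2π], and r and θ are independent. For every α ≥ 0 with α − d ≤ r_max, the cumulative distribution function F(α) = P(d² + r² − 2·d·r·cos(θ) ≤ α²) is given by F(α) = ∫_{|α−d|}^{min(r_max, d+α)} (2·t/(π·r_max²)) · arccos((d² + t² − α²)/(2·d·t)) dt + (max(α − d, 0))²/r_max², where the integral is taken to be 0 when |α − d| > min(r_max, d + α). -/

import Mathlib

/-!
By independence the event has probability `(μ ⊗ ν) S`, with `μ` the radial law and `ν` the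
uniform angle law. For a fixed radius `t > 0` the cosine rule turns the condition into
`cos θ ≥ c(t) := (d² + t² - α²) / (2 d t)`, an event of `ν`-probability `arccos c(t) / π`,
so the probability is `∫₀^{r_max} 2t / (π r_max²) · arccos c(t) dt`. The angle `arccos c(t)`
is `π` for `t ≤ α - d`, where the whole circle of radius `t` lies within distance `α` of the
UAV; this gives the atom term `(α - d)₊² / r_max²`. It is `0` for the remaining
`t ≤ |α - d|` and for `t > d + α`, which gives the limits of the integral.
-/

open MeasureTheory ProbabilityTheory Real Set

noncomputable section

/-- Law of the distance to the center of a point uniform in a disk of radius `R`. -/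
def diskRadiusLaw (R : ℝ) : Measure ℝ :=
  volume.withDensity fun t => if t ∈ Icc 0 R then ENNReal.ofReal (2 * t / R ^ 2) else 0

def uniformAngleLaw : Measure ℝ :=
  ENNReal.ofReal (1 / (2 * π)) • volume.restrict (Icc 0 (2 * π))

instance : IsFiniteMeasure uniformAngleLaw := ⟨by
  rw [uniformAngleLaw, Measure.smul_apply, Measure.restrict_apply_univ, smul_eq_mul]
  exact ENNReal.mul_lt_top ENNReal.ofReal_lt_top measure_Icc_lt_top⟩

/-- The angle at the vertex with adjacent sides `d`, `t` in a triangle with opposite side `α`;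
when no such triangle exists, `arccos` clamps it to `0` or `π`. -/
def cosineRuleAngle (d α t : ℝ) : ℝ :=
  arccos ((d ^ 2 + t ^ 2 - α ^ 2) / (2 * d * t))

end

lemma le_cos_arccos {c : ℝ} (hc : c ≤ 1) : c ≤ cos (arccos c) := by
  rcases le_or_gt (-1) c with hc' | hc'
  · rw [cos_arccos hc' hc]
  · rw [arccos_of_le_neg_one hc'.le, cos_pi]
    exact hc'.le

lemma le_cos_iff_le_arccos {c x : ℝ} (hc : c ≤ 1) (hx₀ : 0 ≤ x) (hxπ : x ≤ π) :
    c ≤ cos x ↔ x ≤ arccos c := by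
  refine ⟨fun h => ?_, fun h => ?_⟩
  · simpa only [arccos_cos hx₀ hxπ] using arccos_le_arccos h
  · exact (le_cos_arccos hc).trans (cos_le_cos_of_nonneg_of_le_pi hx₀ (arccos_le_pi c) h)

lemma Icc_inter_setOf_le_cos {c : ℝ} (hc : c ≤ 1) :
    Icc 0 (2 * π) ∩ {x | c ≤ cos x} =
      Icc 0 (arccos c) ∪ Icc (2 * π - arccos c) (2 * π) := by
  have hA := arccos_le_pi c
  ext x
  simp only [mem_inter_iff, mem_union, mem_Icc, mem_ofPred_eq]
  constructor
  · rintro ⟨⟨hx₀, hx₂⟩, h⟩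
    rcases le_total x π with hx | hx
    · exact Or.inl ⟨hx₀, (le_cos_iff_le_arccos hc hx₀ hx).1 h⟩
    · rw [← cos_two_pi_sub] at h
      have := (le_cos_iff_le_arccos hc (by linarith) (by linarith)).1 h
      exact Or.inr ⟨by linarith, hx₂⟩
  · rintro (⟨hx₀, h⟩ | ⟨h, hx₂⟩)
    · exact ⟨⟨hx₀, by linarith [pi_pos]⟩,
        (le_cos_iff_le_arccos hc hx₀ (h.trans hA)).2 h⟩
    · refine ⟨⟨by linarith, hx₂⟩, ?_⟩
      rw [← cos_two_pi_sub]
      exact (le_cos_iff_le_arccos hc (by linarith) (by linarith)).2 (by linarith)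

lemma volume_Icc_inter_setOf_le_cos (c : ℝ) :
    volume (Icc 0 (2 * π) ∩ {x | c ≤ cos x}) = ENNReal.ofReal (2 * arccos c) := by
  rcases le_or_gt c 1 with hc | hc
  · have hA := arccos_le_pi c
    have hA₀ := arccos_nonneg c
    -- the two arcs overlap at most in the point `π`
    have hdisj : AEDisjoint volume (Icc 0 (arccos c)) (Icc (2 * π - arccos c) (2 * π)) :=
      measure_mono_null (t := Icc (2 * π - arccos c) (arccos c))
        (fun x hx => ⟨hx.2.1, hx.1.2⟩)
        (by rw [volume_Icc, ENNReal.ofReal_eq_zero]; linarith)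
    rw [Icc_inter_setOf_le_cos hc, measure_union₀ nullMeasurableSet_Icc hdisj, volume_Icc,
      volume_Icc, sub_zero, sub_sub_cancel, ← ENNReal.ofReal_add hA₀ hA₀, two_mul]
  · have hempty : Icc 0 (2 * π) ∩ {x | c ≤ cos x} = ∅ :=
      eq_empty_of_forall_notMem fun x hx => (hx.2.trans (cos_le_one x)).not_gt hc
    rw [hempty, arccos_of_one_le hc.le]
    simp

lemma uniformAngleLaw_setOf_le_cos (c : ℝ) :
    uniformAngleLaw {x | c ≤ cos x} = ENNReal.ofReal (arccos c / π) := by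
  rw [uniformAngleLaw, Measure.smul_apply, Measure.restrict_apply
    (measurableSet_le measurable_const measurable_cos), inter_comm,
    volume_Icc_inter_setOf_le_cos, smul_eq_mul, ← ENNReal.ofReal_mul (by positivity)]
  congr 1
  field_simp

lemma cosine_rule_le_sq_iff {d t α θ : ℝ} (hd : 0 < d) (ht : 0 < t) :
    d ^ 2 + t ^ 2 - 2 * d * t * cos θ ≤ α ^ 2 ↔
      (d ^ 2 + t ^ 2 - α ^ 2) / (2 * d * t) ≤ cos θ := by
  rw [div_le_iff₀ (by positivity)]
  constructor <;> intro h <;> linarith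

lemma cosineRuleAngle_eq_pi {d t α : ℝ} (hd : 0 < d) (ht : 0 < t) (h : d + t ≤ α) :
    cosineRuleAngle d α t = π := by
  rw [cosineRuleAngle, arccos_eq_pi, div_le_iff₀ (by positivity)]
  nlinarith

lemma cosineRuleAngle_eq_zero {d t α : ℝ} (hd : 0 < d) (ht : 0 < t) (hα : 0 ≤ α)
    (h : α ≤ |d - t|) : cosineRuleAngle d α t = 0 := by
  rw [cosineRuleAngle, arccos_eq_zero, le_div_iff₀ (by positivity)]
  have : α ^ 2 ≤ (d - t) ^ 2 := by
    rw [← sq_abs (d - t)]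
    exact pow_le_pow_left₀ hα h 2
  nlinarith

lemma cosineRuleAngle_eq_indicator_add_indicator {d t α : ℝ} (hd : 0 < d) (hα : 0 ≤ α)
    (ht : 0 < t) :
    cosineRuleAngle d α t =
      (Ioc |α - d| (d + α)).indicator (cosineRuleAngle d α) t
        + (Ioc 0 (max (α - d) 0)).indicator (fun _ => π) t := by
  by_cases hmid : t ∈ Ioc |α - d| (d + α)
  · have hatom : t ∉ Ioc 0 (max (α - d) 0) := fun h =>
      hmid.1.not_ge (h.2.trans (max_le (le_abs_self _) (abs_nonneg _)))
    simp [hmid, hatom]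
  by_cases hin : t ≤ α - d
  · have hatom : t ∈ Ioc 0 (max (α - d) 0) := ⟨ht, le_max_of_le_left hin⟩
    simp [hmid, hatom, cosineRuleAngle_eq_pi hd ht (by linarith : d + t ≤ α)]
  · have hatom : t ∉ Ioc 0 (max (α - d) 0) := fun h =>
      (le_max_iff.1 h.2).elim hin h.1.not_ge
    have hfar : α ≤ |d - t| := by
      rw [mem_Ioc, not_and_or, not_lt, not_le] at hmid
      rcases hmid with h | h
      · cases abs_cases (α - d) <;> cases abs_cases (d - t) <;> linarith
      · exact le_abs.2 (Or.inr (by linarith))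
    simp [hmid, hatom, cosineRuleAngle_eq_zero hd ht hα hfar]

lemma integrableOn_mul_cosineRuleAngle (d α rmax : ℝ) :
    IntegrableOn (fun t => 2 * t / (π * rmax ^ 2) * cosineRuleAngle d α t) (Ioc 0 rmax) := by
  refine Integrable.mul_bdd (c := π) (Continuous.integrableOn_Ioc (by fun_prop))
    (measurable_arccos.comp (by fun_prop)).aestronglyMeasurable
    (Filter.Eventually.of_forall fun t => ?_)
  rw [cosineRuleAngle, norm_of_nonneg (arccos_nonneg _)]
  exact arccos_le_pi _

lemma setIntegral_mul_cosineRuleAngle {d α rmax : ℝ} (hd : 0 < d) (hrmax : 0 ≤ rmax)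
    (hα : 0 ≤ α) (hαd : α - d ≤ rmax) :
    ∫ t in Ioc 0 rmax, 2 * t / (π * rmax ^ 2) * cosineRuleAngle d α t =
      (∫ t in Ioc |α - d| (min rmax (d + α)), 2 * t / (π * rmax ^ 2) * cosineRuleAngle d α t)
        + (max (α - d) 0) ^ 2 / rmax ^ 2 := by
  set F := fun t => 2 * t / (π * rmax ^ 2) * cosineRuleAngle d α t
  set m := max (α - d) 0
  have hF : IntegrableOn F (Ioc 0 rmax) := integrableOn_mul_cosineRuleAngle d α rmax
  have hatom : IntegrableOn (fun t : ℝ => 2 * t / (π * rmax ^ 2) * π) (Ioc 0 rmax) :=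
    Continuous.integrableOn_Ioc (by fun_prop)
  calc ∫ t in Ioc 0 rmax, F t
      = ∫ t in Ioc 0 rmax, ((Ioc |α - d| (d + α)).indicator F t
          + (Ioc 0 m).indicator (fun t => 2 * t / (π * rmax ^ 2) * π) t) :=
        setIntegral_congr_fun measurableSet_Ioc fun t ht => by
          simp only [F, indicator_mul_right, ← mul_add]
          rw [← cosineRuleAngle_eq_indicator_add_indicator hd hα ht.1]
    _ = (∫ t in Ioc |α - d| (min rmax (d + α)), F t)
          + ∫ t in Ioc 0 m, 2 * t / (π * rmax ^ 2) * π := by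
        rw [integral_add (hF.indicator measurableSet_Ioc) (hatom.indicator measurableSet_Ioc),
          setIntegral_indicator measurableSet_Ioc, setIntegral_indicator measurableSet_Ioc,
          Ioc_inter_Ioc, Ioc_inter_Ioc, max_eq_right (abs_nonneg _), max_self,
          min_eq_right (max_le hαd hrmax)]
    _ = _ := by
        congr 1
        rw [← intervalIntegral.integral_of_le (le_max_right _ _)]
        have hlinear :
            (fun t : ℝ => 2 * t / (π * rmax ^ 2) * π) = fun t => 2 / rmax ^ 2 * t := by
          funext t
          field_simp [pi_pos.ne']
        rw [hlinear, intervalIntegral.integral_const_mul, integral_id]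
        ring

lemma ProbabilityTheory.IndepFun.measure_prodMk_mem_eq {Ω α β : Type*} [MeasurableSpace Ω]
    [MeasurableSpace α] [MeasurableSpace β] {P : Measure Ω} [IsFiniteMeasure P] {X : Ω → α}
    {Y : Ω → β} (hXY : IndepFun X Y P) (hX : Measurable X) (hY : Measurable Y)
    {S : Set (α × β)} (hS : MeasurableSet S) :
    P {ω | (X ω, Y ω) ∈ S} = (P.map X).prod (P.map Y) S := by
  rw [← hXY.map_prod_eq_prod_map_map hX.aemeasurable hY.aemeasurable,
    Measure.map_apply (hX.prodMk hY) hS]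
  rfl

lemma measurableSet_cosine_rule_le (d α : ℝ) :
    MeasurableSet {p : ℝ × ℝ | d ^ 2 + p.1 ^ 2 - 2 * d * p.1 * cos p.2 ≤ α ^ 2} :=
  measurableSet_le (by fun_prop) measurable_const

lemma diskRadiusLaw_prod_uniformAngleLaw_cosine_rule_le {d : ℝ} (hd : 0 < d) (rmax α : ℝ) :
    (diskRadiusLaw rmax).prod uniformAngleLaw
        {p | d ^ 2 + p.1 ^ 2 - 2 * d * p.1 * cos p.2 ≤ α ^ 2} =
      ∫⁻ t in Ioc 0 rmax,
        ENNReal.ofReal (2 * t / (π * rmax ^ 2) * cosineRuleAngle d α t) := by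
  have hS := measurableSet_cosine_rule_le d α
  have hdensity : Measurable fun t : ℝ =>
      if t ∈ Icc 0 rmax then ENNReal.ofReal (2 * t / rmax ^ 2) else 0 :=
    Measurable.ite measurableSet_Icc (by fun_prop) measurable_const
  have hslice : ∀ t, 0 < t →
      uniformAngleLaw (Prod.mk t ⁻¹' {p | d ^ 2 + p.1 ^ 2 - 2 * d * p.1 * cos p.2 ≤ α ^ 2}) =
        ENNReal.ofReal (cosineRuleAngle d α t / π) := fun t ht => by
    rw [cosineRuleAngle, ← uniformAngleLaw_setOf_le_cos]
    congr 1
    ext θ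
    exact cosine_rule_le_sq_iff hd ht
  rw [Measure.prod_apply hS, diskRadiusLaw, lintegral_withDensity_eq_lintegral_mul _ hdensity
    (measurable_measure_prodMk_left hS), ← lintegral_indicator measurableSet_Ioc]
  congr 1
  funext t
  by_cases ht : t ∈ Ioc 0 rmax
  · rw [Pi.mul_apply, if_pos (Ioc_subset_Icc_self ht), indicator_of_mem ht, hslice t ht.1,
      ← ENNReal.ofReal_mul (div_nonneg (by linarith [ht.1]) (sq_nonneg _))]
    congr 1
    field_simp
  · rw [indicator_of_notMem ht, Pi.mul_apply]
    split_ifs with h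
    · obtain rfl : t = 0 := le_antisymm (not_lt.1 fun h' => ht ⟨h', h.2⟩) h.1
      simp
    · exact zero_mul _

/-- CDF of the user-to-relocated-UAV distance (Proposition 1): with `r` having density
`2t/r_max²` on `[0, r_max]`, `θ` uniform on `[0,2π]`, independent, the CDF of
`√(d² + r² − 2dr cos θ)` is the stated integral plus the atom term. -/
theorem stmt_6 {Ω : Type*} [MeasurableSpace Ω] (P : Measure Ω) [IsProbabilityMeasure P]
    (d rmax : ℝ) (hd : 0 < d) (hrmax : 0 < rmax)
    (r θ : Ω → ℝ) (hrmeas : Measurable r) (hθmeas : Measurable θ)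
    (hr : P.map r = volume.withDensity
      (fun t => if t ∈ Set.Icc (0:ℝ) rmax then ENNReal.ofReal (2 * t / rmax ^ 2) else 0))
    (hθ : P.map θ =
      ENNReal.ofReal (1 / (2 * Real.pi)) • volume.restrict (Set.Icc 0 (2 * Real.pi)))
    (hindep : IndepFun r θ P) :
    ∀ α : ℝ, 0 ≤ α → α - d ≤ rmax →
      (P {ω | d ^ 2 + (r ω) ^ 2 - 2 * d * (r ω) * Real.cos (θ ω) ≤ α ^ 2}).toReal =
        (∫ t in Set.Ioc (|α - d|) (min rmax (d + α)),
            (2 * t / (Real.pi * rmax ^ 2)) *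
              Real.arccos ((d ^ 2 + t ^ 2 - α ^ 2) / (2 * d * t)))
          + (max (α - d) 0) ^ 2 / rmax ^ 2 := by
  intro α hα hαd
  have hlaw :=
    hindep.measure_prodMk_mem_eq hrmeas hθmeas (measurableSet_cosine_rule_le d α)
  rw [hr, hθ] at hlaw
  calc (P {ω | d ^ 2 + (r ω) ^ 2 - 2 * d * (r ω) * cos (θ ω) ≤ α ^ 2}).toReal
      = ((diskRadiusLaw rmax).prod uniformAngleLaw
          {p | d ^ 2 + p.1 ^ 2 - 2 * d * p.1 * cos p.2 ≤ α ^ 2}).toReal := congrArg _ hlaw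
    _ = (∫⁻ t in Ioc 0 rmax,
          ENNReal.ofReal (2 * t / (π * rmax ^ 2) * cosineRuleAngle d α t)).toReal := by
        rw [diskRadiusLaw_prod_uniformAngleLaw_cosine_rule_le hd]
    _ = ∫ t in Ioc 0 rmax, 2 * t / (π * rmax ^ 2) * cosineRuleAngle d α t :=
        (integral_eq_lintegral_of_nonneg_ae
          (ae_restrict_of_forall_mem measurableSet_Ioc fun t ht =>
            mul_nonneg (div_nonneg (by linarith [ht.1]) (by positivity)) (arccos_nonneg _))
          (integrableOn_mul_cosineRuleAngle d α rmax).aestronglyMeasurable).symm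
    _ = _ := setIntegral_mul_cosineRuleAngle hd hrmax.le hα hαd
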